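/- For all m ∈ ℕ^d with d ≥ 1, the Lebesgue constant of the polyhedral set Γ̄^{(m)} = {γ ∈ ℕ₀^d : γ_i/m_i ≤ 1 for all i, and γ_i/m_i + γ_j/m_j ≤ 1 for all i ≠ j} satisfies L(Γ̄^{(m)}) ≥ (2π)^{-d} ∏_{i=1}^d ln(m_i + 1). -/

import Mathlib

open scoped Classical

/-- The Lebesgue constant of a finite set `Γ ⊂ ℤ^d` linked to partial Fourier sums. -/
noncomputable def FL {d : ℕ} (Γ : Finset (Fin d → ℤ)) : ℝ :=
  (2 * Real.pi)⁻¹ ^ d *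
    ∫ t : Fin d → ℝ in Set.univ.pi fun _ => Set.Ico (-Real.pi) Real.pi,
      ‖∑ γ ∈ Γ, Complex.exp (Complex.I * ((∑ i, (γ i : ℝ) * t i : ℝ) : ℂ))‖

/-- The polyhedral set `Γ̄^{(m)}` from the paper. -/
noncomputable def GammaBar (d : ℕ) (m : Fin d → ℕ) : Finset (Fin d → ℤ) :=
  ((Fintype.piFinset fun i => Finset.range (m i + 1)).filter
      (fun γ => ∀ i j, i ≠ j → (γ i : ℝ) / (m i) + (γ j : ℝ) / (m j) ≤ 1)).image
    (fun γ i => (γ i : ℤ))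

/-!
Duality: if `‖G‖ ≤ 1` on the torus, then `∫ ‖S‖ ≥ ‖∫ S G‖` for the exponential sum `S` of `Γ̄`.
Take `G(t) = ∏ᵢ g(tᵢ)` with `g = μ - iν w`, where `w` is the sawtooth `(π - t)/π` on `[0, π)`,
`-(π + t)/π` on `[-π, 0)`, `μ = log 2 / (2π)` and `ν = 1 - μ`. Then `‖g‖ ≤ μ + ν = 1`, and the
Fourier coefficients `∫ e^{ikt} g(t) dt` are `log 2` for `k = 0` and `2ν/k` for `k ≥ 1`, all
nonnegative. So `∫ S G = ∑_{γ ∈ Γ̄} ∏ᵢ c_{γᵢ}` is a sum of nonnegative terms, which we may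
restrict to the box `γᵢ ≤ mᵢ/2` inside `Γ̄`. There it factors as `∏ᵢ ∑_{k ≤ mᵢ/2} c_k`, and for
`n = ⌊m/2⌋` we have `∑_{k ≤ n} c_k = log 2 + 2ν H_n ≥ log (2n + 2) ≥ log (m + 1)`, since `2ν ≥ 1`
and `H_n ≥ log (n + 1)`.
-/

open Real MeasureTheory Set Finset
open Complex (I)
open scoped Complex

noncomputable section

def testMean : ℝ := log 2 / (2 * π)

lemma testMean_nonneg : 0 ≤ testMean := by unfold testMean; positivity

lemma testMean_le_half : testMean ≤ 1 / 2 := by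
  rw [testMean, div_le_iff₀ (by positivity)]
  nlinarith [log_two_lt_d9, pi_gt_three]

def testFun (t : ℝ) : ℂ :=
  testMean + I * (1 - testMean) * (t / π - if 0 ≤ t then 1 else -1 : ℝ)

lemma testFun_of_nonneg {t : ℝ} (ht : 0 ≤ t) :
    testFun t = testMean - I * (1 - testMean) + I * (1 - testMean) / π * t := by
  simp only [testFun, if_pos ht]
  push_cast
  ring

lemma testFun_of_neg {t : ℝ} (ht : t < 0) :
    testFun t = testMean + I * (1 - testMean) + I * (1 - testMean) / π * t := by
  simp only [testFun, if_neg ht.not_ge]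
  push_cast
  ring

lemma measurable_testFun : Measurable testFun := by
  unfold testFun
  have : Measurable fun t : ℝ => if 0 ≤ t then (1 : ℝ) else -1 :=
    Measurable.ite measurableSet_Ici measurable_const measurable_const
  fun_prop

lemma norm_testFun_le_one {t : ℝ} (ht : t ∈ Icc (-π) π) : ‖testFun t‖ ≤ 1 := by
  set x : ℝ := t / π - if 0 ≤ t then 1 else -1 with hx
  have hxt : |x| ≤ 1 := by
    have h1 : -1 ≤ t / π := by rw [le_div_iff₀ pi_pos]; linarith [ht.1]
    have h2 : t / π ≤ 1 := by rw [div_le_one pi_pos]; exact ht.2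
    rw [abs_le]
    split_ifs at hx with h0
    · have := div_nonneg h0 pi_pos.le; constructor <;> linarith
    · have := div_neg_of_neg_of_pos (not_le.mp h0) pi_pos; constructor <;> linarith
  have hsplit : testFun t = (testMean : ℂ) + ((1 - testMean) * x : ℝ) * I := by
    rw [testFun, ← hx]
    push_cast
    ring
  have hν : 0 ≤ 1 - testMean := by linarith [testMean_le_half]
  calc ‖testFun t‖ ≤ ‖(testMean : ℂ)‖ + ‖(((1 - testMean) * x : ℝ) : ℂ) * I‖ :=
        hsplit ▸ norm_add_le _ _
    _ = testMean + (1 - testMean) * |x| := by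
        rw [norm_mul, Complex.norm_I, mul_one, Complex.norm_real, Complex.norm_real,
          Real.norm_eq_abs, Real.norm_eq_abs, abs_mul, abs_of_nonneg testMean_nonneg,
          abs_of_nonneg hν]
    _ ≤ 1 := by nlinarith

def testCoeff (k : ℕ) : ℝ := if k = 0 then log 2 else 2 * (1 - testMean) / k

lemma testCoeff_nonneg (k : ℕ) : 0 ≤ testCoeff k := by
  have := testMean_le_half
  unfold testCoeff
  split_ifs
  · positivity
  · exact div_nonneg (by linarith) k.cast_nonneg

lemma sum_range_succ_testCoeff (n : ℕ) :
    ∑ k ∈ range (n + 1), testCoeff k = log 2 + 2 * (1 - testMean) * harmonic n := by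
  simp [sum_range_succ', testCoeff, harmonic, mul_sum, div_eq_mul_inv, add_comm]

lemma log_add_one_le_sum_testCoeff (M : ℕ) :
    log (M + 1) ≤ ∑ k ∈ range (M / 2 + 1), testCoeff k := by
  have hH : log ((M / 2 : ℕ) + 1) ≤ harmonic (M / 2) := by
    exact_mod_cast log_add_one_le_harmonic (M / 2)
  have hν : 1 ≤ 2 * (1 - testMean) := by linarith [testMean_le_half]
  have hH0 : (0 : ℝ) ≤ harmonic (M / 2) := (log_nonneg (by simp)).trans hH
  rw [sum_range_succ_testCoeff]
  calc log (M + 1) ≤ log (2 * ((M / 2 : ℕ) + 1)) := by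
        gcongr
        have : M + 1 ≤ 2 * (M / 2 + 1) := by omega
        exact_mod_cast this
    _ = log 2 + log ((M / 2 : ℕ) + 1) := log_mul two_ne_zero (by positivity)
    _ ≤ log 2 + 2 * (1 - testMean) * harmonic (M / 2) := by gcongr; nlinarith

lemma integral_cexp_mul_affine {c : ℂ} (hc : c ≠ 0) (a b : ℂ) (l r : ℝ) :
    ∫ t in l..r, cexp (c * t) * (a + b * t) =
      cexp (c * r) * ((a + b * r) / c - b / c ^ 2) -
        cexp (c * l) * ((a + b * l) / c - b / c ^ 2) := by
  have hF (t : ℝ) : HasDerivAt (fun s : ℝ => cexp (c * s) * ((a + b * s) / c - b / c ^ 2))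
      (cexp (c * t) * (a + b * t)) t := by
    have hexp : HasDerivAt (fun z : ℂ => cexp (c * z)) (cexp (c * t) * c) t := by
      simpa using ((hasDerivAt_id (t : ℂ)).const_mul c).cexp
    have haff : HasDerivAt (fun z : ℂ => (a + b * z) / c - b / c ^ 2) (b / c) t := by
      simpa using (((hasDerivAt_id (t : ℂ)).const_mul b).const_add a).div_const c
        |>.sub_const (b / c ^ 2)
    have h := hexp.fun_mul haff
    rw [show cexp (c * t) * c * ((a + b * t) / c - b / c ^ 2) + cexp (c * t) * (b / c) =
      cexp (c * t) * (a + b * t) by field_simp; ring] at h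
    exact h.comp_ofReal
  exact intervalIntegral.integral_eq_sub_of_hasDerivAt (fun t _ => hF t)
    (Continuous.intervalIntegrable (by fun_prop) _ _)

lemma integral_affine (a b : ℂ) (l r : ℝ) :
    ∫ t in l..r, (a + b * t) = a * (r - l) + b * (r ^ 2 - l ^ 2) / 2 := by
  rw [intervalIntegral.integral_add intervalIntegrable_const
    (Continuous.intervalIntegrable (by fun_prop) _ _), intervalIntegral.integral_const_mul,
    intervalIntegral.integral_const, intervalIntegral.integral_ofReal, integral_id,
    Complex.real_smul]
  push_cast
  ring

lemma setIntegral_Ico_eq_intervalIntegral {E : Type*} [NormedAddCommGroup E] [NormedSpace ℝ E]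
    {f : ℝ → E} {a b : ℝ} (hab : a ≤ b) :
    ∫ t in Ico a b, f t = ∫ t in a..b, f t := by
  rw [intervalIntegral.integral_of_le hab, integral_Ico_eq_integral_Ioo,
    integral_Ioc_eq_integral_Ioo]

lemma setIntegral_Ico_cexp_mul_testFun (k : ℕ) :
    ∫ t in Ico (-π) π, cexp (I * k * t) * testFun t = testCoeff k := by
  set b : ℂ := I * (1 - testMean) / π
  set p : ℂ := testMean - I * (1 - testMean)
  set q : ℂ := testMean + I * (1 - testMean)
  have hneg : EqOn (fun t : ℝ => cexp (I * k * t) * testFun t)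
      (fun t => cexp (I * k * t) * (q + b * t)) (Ico (-π) 0) := fun t ht => by
    simp only [testFun_of_neg ht.2, q, b]
  have hpos : EqOn (fun t : ℝ => cexp (I * k * t) * testFun t)
      (fun t => cexp (I * k * t) * (p + b * t)) (Ico 0 π) := fun t ht => by
    simp only [testFun_of_nonneg ht.1, p, b]
  have hint (a : ℂ) (l r : ℝ) :
      IntegrableOn (fun t : ℝ => cexp (I * k * t) * (a + b * t)) (Ico l r) :=
    (Continuous.integrableOn_Icc (by fun_prop)).mono_set Ico_subset_Icc_self
  rw [← Ico_union_Ico_eq_Ico (neg_nonpos.2 pi_pos.le) pi_pos.le,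
    setIntegral_union Ico_disjoint_Ico_same measurableSet_Ico
      ((hint q _ _).congr_fun hneg.symm measurableSet_Ico)
      ((hint p _ _).congr_fun hpos.symm measurableSet_Ico),
    setIntegral_congr_fun measurableSet_Ico hneg, setIntegral_congr_fun measurableSet_Ico hpos,
    setIntegral_Ico_eq_intervalIntegral (neg_nonpos.2 pi_pos.le),
    setIntegral_Ico_eq_intervalIntegral pi_pos.le]
  have hπ : (π : ℂ) ≠ 0 := by exact_mod_cast pi_ne_zero
  rcases eq_or_ne k 0 with rfl | hk
  · simp only [CharP.cast_eq_zero, mul_zero, zero_mul, Complex.exp_zero, one_mul, integral_affine,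
      testCoeff, if_pos, p, q, b, testMean]
    push_cast
    field_simp
    ring
  -- The boundary terms at `±π` cancel, so only the jump of `testFun` at `0` contributes.
  · have hc : I * k ≠ 0 := mul_ne_zero Complex.I_ne_zero (Nat.cast_ne_zero.2 hk)
    have hper : cexp (I * k * π) = cexp (I * k * (-π : ℝ)) := by
      rw [show I * k * π = I * k * (-π : ℝ) + (k : ℤ) * (2 * π * I) by push_cast; ring,
        Complex.exp_add, Complex.exp_int_mul_two_pi_mul_I, mul_one]
    rw [integral_cexp_mul_affine hc, integral_cexp_mul_affine hc, hper]
    simp only [testCoeff, if_neg hk, p, q, b]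
    push_cast
    rw [mul_zero, Complex.exp_zero]
    field_simp
    ring

theorem setIntegral_univ_pi_prod {ι 𝕜 : Type*} [Fintype ι] [RCLike 𝕜] {E : ι → Type*}
    [∀ i, MeasureSpace (E i)] [∀ i, SigmaFinite (volume : Measure (E i))]
    (s : ∀ i, Set (E i)) (f : ∀ i, E i → 𝕜) :
    ∫ t in univ.pi s, ∏ i, f i (t i) = ∏ i, ∫ x in s i, f i x := by
  rw [volume_pi, Measure.restrict_pi_pi, integral_fintype_prod_eq_prod]

lemma natCast_div_le_half {a m : ℕ} (h : a ≤ m / 2) : (a : ℝ) / m ≤ 1 / 2 := by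
  rcases m.eq_zero_or_pos with rfl | hm
  · simp
  rw [div_le_div_iff₀ (by exact_mod_cast hm) two_pos]
  exact_mod_cast (by omega : a * 2 ≤ 1 * m)

section Cube

variable {ι : Type*} [Fintype ι]

lemma integral_pi_Ico_prod_cexp_mul_testFun (x : ι → ℕ) :
    ∫ t in univ.pi fun _ : ι => Ico (-π) π, ∏ i, cexp (I * x i * t i) * testFun (t i) =
      ∏ i, testCoeff (x i) := by
  rw [setIntegral_univ_pi_prod (E := fun _ => ℝ) _ fun i s => cexp (I * x i * s) * testFun s]
  push_cast
  exact prod_congr rfl fun i _ => setIntegral_Ico_cexp_mul_testFun (x i)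

lemma norm_cexp_mul_testFun_le_one (n : ℕ) {s : ℝ} (hs : s ∈ Icc (-π) π) :
    ‖cexp (I * n * s) * testFun s‖ ≤ 1 := by
  have hexp : ‖cexp (I * n * s)‖ = 1 := by simp [Complex.norm_exp]
  rw [norm_mul, hexp, one_mul]
  exact norm_testFun_le_one hs

lemma norm_prod_le_one_of_forall {𝕜 : Type*} [NormedField 𝕜] {f : ι → 𝕜} (h : ∀ i, ‖f i‖ ≤ 1) :
    ‖∏ i, f i‖ ≤ 1 := by
  rw [norm_prod]
  exact prod_le_one (fun _ _ => norm_nonneg _) fun i _ => h i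

theorem sum_prod_testCoeff_le_integral_norm (Φ : Finset (ι → ℕ)) :
    ∑ x ∈ Φ, ∏ i, testCoeff (x i) ≤
      ∫ t in univ.pi fun _ : ι => Ico (-π) π,
        ‖∑ x ∈ Φ, cexp (I * ((∑ i, (x i : ℝ) * t i : ℝ) : ℂ))‖ := by
  set Q : Set (ι → ℝ) := univ.pi fun _ => Ico (-π) π
  have hQ : MeasurableSet Q := MeasurableSet.univ_pi fun _ => measurableSet_Ico
  have hQ_ne_top : volume Q ≠ ⊤ := by simp [Q, volume_pi_pi]
  set S : (ι → ℝ) → ℂ := fun t => ∑ x ∈ Φ, cexp (I * ((∑ i, (x i : ℝ) * t i : ℝ) : ℂ))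
  have hSG (t : ι → ℝ) : S t * ∏ i, testFun (t i) =
      ∑ x ∈ Φ, ∏ i, cexp (I * x i * t i) * testFun (t i) := by
    simp only [S, sum_mul, prod_mul_distrib, Complex.ofReal_sum, mul_sum, Complex.exp_sum]
    push_cast
    simp only [mul_assoc]
  have hint (x : ι → ℕ) :
      IntegrableOn (fun t => ∏ i, cexp (I * x i * t i) * testFun (t i)) Q := by
    refine Measure.integrableOn_of_bounded hQ_ne_top ?_
      ((ae_restrict_mem hQ).mono fun t ht => norm_prod_le_one_of_forall fun i =>
        norm_cexp_mul_testFun_le_one (x i) (Ico_subset_Icc_self (ht i (mem_univ i))))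
    exact (Finset.measurable_prod _ fun i _ => (Complex.measurable_exp.comp (by fun_prop)).mul
      (measurable_testFun.comp (measurable_pi_apply i))).aestronglyMeasurable
  calc ∑ x ∈ Φ, ∏ i, testCoeff (x i) = ‖∫ t in Q, S t * ∏ i, testFun (t i)‖ := by
        simp_rw [hSG]
        rw [integral_finsetSum _ fun x _ => hint x,
          sum_congr rfl fun x _ => integral_pi_Ico_prod_cexp_mul_testFun x, ← Complex.ofReal_sum,
          Complex.norm_real, Real.norm_of_nonneg]
        exact sum_nonneg fun x _ => prod_nonneg fun i _ => testCoeff_nonneg (x i)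
    _ ≤ ∫ t in Q, ‖S t‖ := by
        refine norm_integral_le_of_norm_le ?_ ((ae_restrict_mem hQ).mono fun t ht => ?_)
        · exact ((by fun_prop : Continuous fun t => ‖S t‖).continuousOn.integrableOn_compact
            (isCompact_univ_pi fun _ => isCompact_Icc)).mono_set
            (pi_mono fun _ _ => Ico_subset_Icc_self)
        · rw [norm_mul]
          exact mul_le_of_le_one_right (norm_nonneg _) (norm_prod_le_one_of_forall fun i =>
            norm_testFun_le_one (Ico_subset_Icc_self (ht i (mem_univ i))))

lemma piFinset_range_half_subset [DecidableEq ι] (m : ι → ℕ)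
    [DecidablePred fun γ : ι → ℕ => ∀ i j, i ≠ j → (γ i : ℝ) / (m i) + (γ j : ℝ) / (m j) ≤ 1] :
    (Fintype.piFinset fun i => range (m i / 2 + 1)) ⊆
      (Fintype.piFinset fun i => range (m i + 1)).filter
        fun γ => ∀ i j, i ≠ j → (γ i : ℝ) / (m i) + (γ j : ℝ) / (m j) ≤ 1 := by
  intro x hx
  have hhalf (i : ι) : x i ≤ m i / 2 :=
    Nat.lt_succ_iff.1 (mem_range.1 (Fintype.mem_piFinset.1 hx i))
  refine mem_filter.2 ⟨Fintype.mem_piFinset.2 fun i => mem_range.2 (by have := hhalf i; omega),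
    fun i j _ => ?_⟩
  linarith [natCast_div_le_half (hhalf i), natCast_div_le_half (hhalf j)]

end Cube

end

theorem stmt_8_general (d : ℕ) (m : Fin d → ℕ) :
    (2 * Real.pi)⁻¹ ^ d * ∏ i, Real.log (m i + 1) ≤ FL (GammaBar d m) := by
  have hinj : Function.Injective fun (x : Fin d → ℕ) i => (x i : ℤ) :=
    fun x y h => funext fun i => by simpa using congrFun h i
  simp_rw [FL, GammaBar, sum_image fun x _ y _ h => hinj h, Int.cast_natCast]
  gcongr
  refine le_trans ?_ (sum_prod_testCoeff_le_integral_norm _)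
  calc ∏ i, log (m i + 1)
      ≤ ∏ i, ∑ k ∈ range (m i / 2 + 1), testCoeff k :=
        prod_le_prod (fun i _ => log_nonneg (by simp)) fun i _ => log_add_one_le_sum_testCoeff (m i)
    _ = ∑ x ∈ Fintype.piFinset fun i => range (m i / 2 + 1), ∏ i, testCoeff (x i) :=
        prod_univ_sum _ _
    _ ≤ _ := sum_le_sum_of_subset_of_nonneg (piFinset_range_half_subset m) fun x _ _ =>
        prod_nonneg fun i _ => testCoeff_nonneg (x i)

theorem stmt_8 (d : ℕ) (hd : 1 ≤ d) (m : Fin d → ℕ) (hm : ∀ i, 1 ≤ m i) :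
    (2 * Real.pi)⁻¹ ^ d * ∏ i, Real.log (m i + 1) ≤ FL (GammaBar d m) :=
  stmt_8_general d m
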